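/- Let m, n be coprime positive integers and γ an (m,n)-Dyck path. Under the insertion map γ ↦ γ* (each horizontal step ending at (a,b) becomes a step ending at (a+b,b), each vertical step from (a',b') becomes a step from (a'+b',b')), a pair (r_h, r_v) ∈ O(γ) satisfies the common-transversal condition in γ (i.e., some line of slope n/m meets both steps) if and only if the corresponding pair (r_h*, r_v*) in γ* satisfies condition (1A): the line of slope n/(m+n) through the left endpoint of r_h* intersects r_v*. Equivalently, H(γ) = H₁(γ*) ∩ ι(O(γ)). -/

import Mathlib

open scoped Classical
open Finset

/-- A lattice path is encoded as a list of steps: `false` = horizontal step `(1,0)`,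
`true` = vertical step `(0,1)`.  `IsDyck m n w` says `w` is an `(m,n)`-Dyck path:
it has `m` horizontal and `n` vertical steps and every intermediate lattice point
`(x,y)` satisfies `n*x ≤ m*y` (the path stays weakly above the diagonal `y=(n/m)x`). -/
def IsDyck (m n : ℕ) (w : List Bool) : Prop :=
  w.count false = m ∧ w.count true = n ∧
    ∀ p ∈ w.inits, n * p.count false ≤ m * p.count true

/-- `x`-coordinate of the point of the path reached after the first `i` steps. -/
def ptX (w : List Bool) (i : ℕ) : ℤ := ((w.take i).count false : ℤ)

/-- `y`-coordinate of the point of the path reached after the first `i` steps. -/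
def ptY (w : List Bool) (i : ℕ) : ℤ := ((w.take i).count true : ℤ)

/-- `O(γ)`: pairs `(i,j)` of a horizontal step `i` and a vertical step `j`
appearing later in the path. -/
def Opairs (w : List Bool) : Finset (ℕ × ℕ) :=
  (Finset.range w.length ×ˢ Finset.range w.length).filter
    (fun ij => ij.1 < ij.2 ∧ w[ij.1]? = some false ∧ w[ij.2]? = some true)

/-- The set of (bottom-left corners of) complete unit lattice squares lying between the
path and the diagonal `y = (n/m)x`: the square `[x,x+1]×[y,y+1]` lies weakly above the
diagonal and strictly below the path. -/
noncomputable def areaSet (m n : ℕ) (w : List Bool) : Finset (ℕ × ℕ) :=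
  ((Finset.range m) ×ˢ (Finset.range n)).filter (fun xy =>
    n * (xy.1 + 1) ≤ m * xy.2 ∧
    ∃ i < w.length, w[i]? = some false ∧
      (w.take (i+1)).count false = xy.1 + 1 ∧ xy.2 + 1 ≤ (w.take (i+1)).count true)

/-- `area(γ)`: the number of complete unit lattice squares between the path and the
diagonal. -/
noncomputable def area (m n : ℕ) (w : List Bool) : ℕ := (areaSet m n w).card

/-- Some line of slope `n/m` (i.e. `{(x,y) | n*x - m*y = c}`) meets both the closed
horizontal step segment `i` and the closed vertical step segment `j`. -/
def MeetsBoth (m n : ℕ) (w : List Bool) (i j : ℕ) : Prop :=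
  ∃ c : ℝ,
    (∃ x : ℝ, (ptX w i : ℝ) ≤ x ∧ x ≤ (ptX w i : ℝ) + 1 ∧
      (n : ℝ) * x - (m : ℝ) * (ptY w i : ℝ) = c) ∧
    (∃ y : ℝ, (ptY w j : ℝ) ≤ y ∧ y ≤ (ptY w j : ℝ) + 1 ∧
      (n : ℝ) * (ptX w j : ℝ) - (m : ℝ) * y = c)

/-- Condition (1A): the line of slope `n/m` through the left endpoint `(a-1,b)` of the
horizontal step `i` meets the closed vertical step segment `j`. -/
def Cond1A (m n : ℕ) (w : List Bool) (i j : ℕ) : Prop :=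
  ∃ y : ℝ, (ptY w j : ℝ) ≤ y ∧ y ≤ (ptY w j : ℝ) + 1 ∧
    (n : ℝ) * ((ptX w j : ℝ) - (ptX w i : ℝ)) = (m : ℝ) * (y - (ptY w i : ℝ))

/-- Condition (2A): the line of slope `n/m` through the top endpoint `(a',b'+1)` of the
vertical step `j` meets the closed horizontal step segment `i`. -/
def Cond2A (m n : ℕ) (w : List Bool) (i j : ℕ) : Prop :=
  ∃ x : ℝ, (ptX w i : ℝ) ≤ x ∧ x ≤ (ptX w i : ℝ) + 1 ∧
    (n : ℝ) * (x - (ptX w j : ℝ)) = (m : ℝ) * ((ptY w i : ℝ) - ((ptY w j : ℝ) + 1))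

/-- `H(γ)`: pairs in `O(γ)` admitting a common transversal line parallel to the
diagonal. -/
noncomputable def Hpairs (m n : ℕ) (w : List Bool) : Finset (ℕ × ℕ) :=
  (Opairs w).filter (fun ij => MeetsBoth m n w ij.1 ij.2)

/-- `H₁(γ)`: pairs in `O(γ)` satisfying condition (1A). -/
noncomputable def H1pairs (m n : ℕ) (w : List Bool) : Finset (ℕ × ℕ) :=
  (Opairs w).filter (fun ij => Cond1A m n w ij.1 ij.2)

/-- `H₂(γ)`: pairs in `O(γ)` satisfying condition (2A). -/
noncomputable def H2pairs (m n : ℕ) (w : List Bool) : Finset (ℕ × ℕ) :=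
  (Opairs w).filter (fun ij => Cond2A m n w ij.1 ij.2)

/-- The line of slope `n/m` through the point `(px,py)` meets the closed segment of the
horizontal step `i`. -/
def lineHitsH (m n : ℕ) (w : List Bool) (px py : ℤ) (i : ℕ) : Prop :=
  w[i]? = some false ∧
    ∃ x : ℝ, (ptX w i : ℝ) ≤ x ∧ x ≤ (ptX w i : ℝ) + 1 ∧
      (n : ℝ) * (x - (px : ℝ)) = (m : ℝ) * ((ptY w i : ℝ) - (py : ℝ))

/-- The line of slope `n/m` through the point `(px,py)` meets the closed segment of the
vertical step `j`. -/
def lineHitsV (m n : ℕ) (w : List Bool) (px py : ℤ) (j : ℕ) : Prop :=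
  w[j]? = some true ∧
    ∃ y : ℝ, (ptY w j : ℝ) ≤ y ∧ y ≤ (ptY w j : ℝ) + 1 ∧
      (n : ℝ) * ((ptX w j : ℝ) - (px : ℝ)) = (m : ℝ) * (y - (py : ℝ))

/-- Outer vertices of the path, encoded by the index `j` of a vertical step that is
immediately followed by a horizontal step; the vertex itself is the point
`(ptX w (j+1), ptY w (j+1))`. -/
def outerIdx (w : List Bool) : Finset ℕ :=
  (Finset.range w.length).filter
    (fun j => w[j]? = some true ∧ w[j+1]? = some false)

/-- The perpendicular distance from the diagonal of the outer vertex indexed by `j`,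
measured by `m*y - n*x` (proportional to the true distance). -/
def diagDist (m n : ℕ) (w : List Bool) (j : ℕ) : ℤ :=
  (m : ℤ) * ptY w (j+1) - (n : ℤ) * ptX w (j+1)

/-- `V(γ)`: outer vertices other than one farthest from the diagonal. -/
def Vset (m n : ℕ) (w : List Bool) : Finset ℕ :=
  (outerIdx w).filter (fun j => ∃ j' ∈ outerIdx w, diagDist m n w j < diagDist m n w j')

/-- `k(p)`: the number of horizontal steps of the path, other than the horizontal step
starting at the outer vertex `p` (indexed by `j`), met by the line of slope `n/m`
through `p`. -/
noncomputable def kH (m n : ℕ) (w : List Bool) (j : ℕ) : ℕ :=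
  ((Finset.range w.length).filter
    (fun i => i ≠ j + 1 ∧ lineHitsH m n w (ptX w (j+1)) (ptY w (j+1)) i)).card

/-- The number of vertical steps of the path, other than the vertical step ending at the
outer vertex `p` (indexed by `j`), met by the line of slope `n/m` through `p`. -/
noncomputable def kV (m n : ℕ) (w : List Bool) (j : ℕ) : ℕ :=
  ((Finset.range w.length).filter
    (fun i => i ≠ j ∧ lineHitsV m n w (ptX w (j+1)) (ptY w (j+1)) i)).card

/-- `k₁(p)`: the number of vertical steps occurring after the outer vertex `p`
(indexed by `j`) met by the line of slope `n/m` through `p`. -/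
noncomputable def k1 (m n : ℕ) (w : List Bool) (j : ℕ) : ℕ :=
  ((Finset.range w.length).filter
    (fun i => j < i ∧ lineHitsV m n w (ptX w (j+1)) (ptY w (j+1)) i)).card

/-- `k₂(p)`: the number of horizontal steps occurring before the outer vertex `p`
(indexed by `j`) met by the line of slope `n/m` through `p`. -/
noncomputable def k2 (m n : ℕ) (w : List Bool) (j : ℕ) : ℕ :=
  ((Finset.range w.length).filter
    (fun i => i ≤ j ∧ lineHitsH m n w (ptX w (j+1)) (ptY w (j+1)) i)).card

/-- The insertion map `γ ↦ γ*`: insert one horizontal step immediately after each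
vertical step. -/
def star : List Bool → List Bool
  | [] => []
  | true :: w => true :: false :: star w
  | false :: w => false :: star w

/-- The index in `γ*` of the step corresponding to the step of index `i` in `γ`. -/
def starIdx (w : List Bool) (i : ℕ) : ℕ := i + (w.take i).count true

/-- A Dyck path is rugged if every vertical step is immediately followed by a
horizontal step. -/
def Rugged (w : List Bool) : Prop :=
  ∀ i, w[i]? = some true → w[i+1]? = some false

/-! Write `Δx, Δy` for the differences of the starting points of the two steps. A common
transversal of slope `n / m` exists iff `n Δx - m Δy ∈ [0, m + n]`, and condition (1A) for slope
`n / M` holds iff `n Δx - M Δy ∈ [0, M]`. The insertion map acts on these points by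
`(x, y) ↦ (x + y, y)`, which turns `n Δx - (m + n) Δy` into `n Δx - m Δy`; so for `M = m + n`
the two conditions coincide. -/

section Star

lemma star_append (a b : List Bool) : star (a ++ b) = star a ++ star b := by
  induction a with
  | nil => rfl
  | cons x a ih => cases x <;> simp [_root_.star, ih]

lemma count_true_star (w : List Bool) : (star w).count true = w.count true := by
  induction w with
  | nil => rfl
  | cons x w ih => cases x <;> simp [_root_.star, ih]

lemma count_false_star (w : List Bool) :
    (star w).count false = w.count false + w.count true := by
  induction w with
  | nil => rfl
  | cons x w ih =>
    have := List.count_false_add_count_true w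
    cases x <;> simp [_root_.star, ih] <;> omega

lemma length_star (w : List Bool) : (star w).length = w.length + w.count true := by
  rw [← List.count_false_add_count_true, count_false_star, count_true_star,
    ← List.count_false_add_count_true w]

lemma length_star_take {w : List Bool} {i : ℕ} (hi : i ≤ w.length) :
    (star (w.take i)).length = starIdx w i := by
  rw [length_star, List.length_take_of_le hi, starIdx]

lemma star_eq_star_take_append_star_drop (w : List Bool) (i : ℕ) :
    star w = star (w.take i) ++ star (w.drop i) := by
  rw [← star_append, List.take_append_drop]

lemma take_starIdx_star (w : List Bool) (i : ℕ) :
    (star w).take (starIdx w i) = star (w.take i) := by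
  rcases le_or_gt i w.length with hi | hi
  · rw [star_eq_star_take_append_star_drop w i, List.take_left' (length_star_take hi)]
  · have htake : w.take i = w := List.take_of_length_le hi.le
    rw [htake, List.take_of_length_le]
    rw [length_star, starIdx, htake]
    omega

lemma getElem?_star_starIdx {w : List Bool} {i : ℕ} (hi : i < w.length) :
    (star w)[starIdx w i]? = w[i]? := by
  have hlen := length_star_take hi.le
  rw [star_eq_star_take_append_star_drop w i, List.getElem?_append_right hlen.le, hlen,
    Nat.sub_self, List.drop_eq_getElem_cons hi, List.getElem?_eq_getElem hi]
  cases w[i] <;> rfl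

lemma starIdx_strictMono (w : List Bool) : StrictMono (starIdx w) := by
  intro i j hij
  have := (List.take_prefix_take_left (l := w) hij.le).count_le true
  unfold starIdx
  omega

lemma starIdx_lt_length_star {w : List Bool} {j : ℕ} (hj : j < w.length) :
    starIdx w j < (star w).length := by
  have := (List.take_sublist j w).count_le true
  rw [length_star, starIdx]
  omega

lemma starIdx_mem_Opairs {w : List Bool} {i j : ℕ} (h : (i, j) ∈ Opairs w) :
    (starIdx w i, starIdx w j) ∈ Opairs (star w) := by
  simp only [Opairs, Finset.mem_filter, Finset.mem_product, Finset.mem_range] at h ⊢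
  obtain ⟨⟨hi, hj⟩, hij, hfalse, htrue⟩ := h
  exact ⟨⟨starIdx_lt_length_star hi, starIdx_lt_length_star hj⟩, starIdx_strictMono w hij,
    (getElem?_star_starIdx hi).trans hfalse, (getElem?_star_starIdx hj).trans htrue⟩

lemma ptX_star (w : List Bool) (i : ℕ) :
    ptX (star w) (starIdx w i) = ptX w i + ptY w i := by
  simp only [ptX, ptY, take_starIdx_star, count_false_star]
  push_cast
  ring

lemma ptY_star (w : List Bool) (i : ℕ) : ptY (star w) (starIdx w i) = ptY w i := by
  simp only [ptY, take_starIdx_star, count_true_star]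

end Star

section Intervals

lemma exists_mem_Icc_mul_eq_iff {b d : ℝ} (hb : 0 ≤ b) :
    (∃ t ∈ Set.Icc (0 : ℝ) 1, b * t = d) ↔ d ∈ Set.Icc 0 b := by
  rw [← Set.mem_image, Set.image_mul_left_Icc hb zero_le_one, mul_zero, mul_one]

lemma exists_mem_Icc_mul_add_mul_eq_iff {a b d : ℝ} (ha : 0 ≤ a) (hb : 0 ≤ b) :
    (∃ s ∈ Set.Icc (0 : ℝ) 1, ∃ t ∈ Set.Icc (0 : ℝ) 1, a * s + b * t = d) ↔
      d ∈ Set.Icc 0 (a + b) := by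
  constructor
  · rintro ⟨s, ⟨hs0, hs1⟩, t, ⟨ht0, ht1⟩, rfl⟩
    constructor <;> nlinarith
  · rintro ⟨hd0, hd1⟩
    rcases (add_nonneg ha hb).eq_or_lt with hab | hab
    · exact ⟨0, ⟨le_rfl, zero_le_one⟩, 0, ⟨le_rfl, zero_le_one⟩, by linarith⟩
    · have hs : d / (a + b) ∈ Set.Icc (0 : ℝ) 1 :=
        ⟨div_nonneg hd0 hab.le, div_le_one_of_le₀ hd1 hab.le⟩
      refine ⟨_, hs, _, hs, ?_⟩
      rw [← add_mul, mul_div_cancel₀ _ hab.ne']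

end Intervals

section Transversals

/-- The paper's `n(a' - a) - m(b' - b) + n`: here `(ptX w i, ptY w i)` is the left endpoint
`(a - 1, b)` of the horizontal step `i`. -/
def diagOffset (m n : ℕ) (w : List Bool) (i j : ℕ) : ℤ :=
  n * (ptX w j - ptX w i) - m * (ptY w j - ptY w i)

variable (m n : ℕ) (w : List Bool) (i j : ℕ)

lemma meetsBoth_iff_diagOffset_mem_Icc :
    MeetsBoth m n w i j ↔ diagOffset m n w i j ∈ Set.Icc 0 ((m + n : ℕ) : ℤ) := by
  have hcast : MeetsBoth m n w i j ↔ ∃ s ∈ Set.Icc (0 : ℝ) 1, ∃ t ∈ Set.Icc (0 : ℝ) 1,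
      (n : ℝ) * s + (m : ℝ) * t = (diagOffset m n w i j : ℝ) := by
    simp only [diagOffset, Set.mem_Icc]
    push_cast
    constructor
    · rintro ⟨c, ⟨x, hx0, hx1, rfl⟩, y, hy0, hy1, hc⟩
      exact ⟨x - ptX w i, ⟨by linarith, by linarith⟩, y - ptY w j, ⟨by linarith, by linarith⟩,
        by linarith⟩
    · rintro ⟨s, ⟨hs0, hs1⟩, t, ⟨ht0, ht1⟩, hst⟩
      exact ⟨_, ⟨ptX w i + s, by linarith, by linarith, rfl⟩, ptY w j + t, by linarith,
        by linarith, by linarith⟩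
  rw [hcast, exists_mem_Icc_mul_add_mul_eq_iff (Nat.cast_nonneg n) (Nat.cast_nonneg m), add_comm]
  simp only [Set.mem_Icc]
  norm_cast

lemma cond1A_iff_diagOffset_mem_Icc :
    Cond1A m n w i j ↔ diagOffset m n w i j ∈ Set.Icc 0 (m : ℤ) := by
  have hcast : Cond1A m n w i j ↔ ∃ t ∈ Set.Icc (0 : ℝ) 1,
      (m : ℝ) * t = (diagOffset m n w i j : ℝ) := by
    simp only [Cond1A, diagOffset, Set.mem_Icc]
    push_cast
    constructor
    · rintro ⟨y, hy0, hy1, hy⟩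
      exact ⟨y - ptY w j, ⟨by linarith, by linarith⟩, by linarith⟩
    · rintro ⟨t, ⟨ht0, ht1⟩, ht⟩
      exact ⟨ptY w j + t, by linarith, by linarith, by linarith⟩
  rw [hcast, exists_mem_Icc_mul_eq_iff (Nat.cast_nonneg m)]
  simp only [Set.mem_Icc]
  norm_cast

lemma diagOffset_star :
    diagOffset (m + n) n (star w) (starIdx w i) (starIdx w j) = diagOffset m n w i j := by
  simp only [diagOffset, ptX_star, ptY_star]
  push_cast
  ring

lemma meetsBoth_iff_cond1A_star :
    MeetsBoth m n w i j ↔ Cond1A (m + n) n (star w) (starIdx w i) (starIdx w j) := by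
  rw [meetsBoth_iff_diagOffset_mem_Icc, cond1A_iff_diagOffset_mem_Icc, diagOffset_star]

end Transversals

lemma Finset.image_filter_eq_filter_inter_image {α β : Type*} [DecidableEq β]
    {s : Finset α} {t : Finset β} {f : α → β} {p : α → Prop} {q : β → Prop}
    [DecidablePred p] [DecidablePred q] (hf : ∀ x ∈ s, f x ∈ t)
    (hpq : ∀ x ∈ s, q (f x) ↔ p x) :
    (s.filter p).image f = t.filter q ∩ s.image f := by
  ext y
  simp only [Finset.mem_image, Finset.mem_inter, Finset.mem_filter]
  constructor
  · rintro ⟨x, ⟨hx, hpx⟩, rfl⟩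
    exact ⟨⟨hf x hx, (hpq x hx).2 hpx⟩, x, hx, rfl⟩
  · rintro ⟨⟨-, hqy⟩, x, hx, rfl⟩
    exact ⟨x, ⟨hx, (hpq x hx).1 hqy⟩, rfl⟩

theorem statement11_general (m n : ℕ) (w : List Bool) :
    (∀ ij ∈ Opairs w,
      MeetsBoth m n w ij.1 ij.2 ↔
        Cond1A (m + n) n (star w) (starIdx w ij.1) (starIdx w ij.2)) ∧
    (Hpairs m n w).image (fun ij => (starIdx w ij.1, starIdx w ij.2)) =
      H1pairs (m + n) n (star w) ∩
        (Opairs w).image (fun ij => (starIdx w ij.1, starIdx w ij.2)) :=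
  ⟨fun ij _ => meetsBoth_iff_cond1A_star m n w ij.1 ij.2,
    Finset.image_filter_eq_filter_inter_image (fun _ hij => starIdx_mem_Opairs hij)
      (fun ij _ => (meetsBoth_iff_cond1A_star m n w ij.1 ij.2).symm)⟩

/-- a pair in `O(γ)` has a common transversal in `γ` iff the corresponding
pair of `γ*` satisfies condition (1A); equivalently `H(γ) = H₁(γ*) ∩ ι(O(γ))`. -/
theorem statement11 (m n : ℕ) (hm : 0 < m) (hn : 0 < n) (h : Nat.Coprime m n)
    (w : List Bool) (hw : IsDyck m n w) :
    (∀ ij ∈ Opairs w,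
      MeetsBoth m n w ij.1 ij.2 ↔
        Cond1A (m + n) n (star w) (starIdx w ij.1) (starIdx w ij.2)) ∧
    (Hpairs m n w).image (fun ij => (starIdx w ij.1, starIdx w ij.2)) =
      H1pairs (m + n) n (star w) ∩
        (Opairs w).image (fun ij => (starIdx w ij.1, starIdx w ij.2)) :=
  statement11_general m n w
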